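/- There exists a noncrossing perfect matching of 12 points on a circle (labeled a₁,…,a₁₂) that is not fixed by any reflection of the regular 12-gon, but every noncrossing perfect matching of 6 points on a circle is fixed by some reflection of the regular hexagon. -/
import Mathlib

set_option maxRecDepth 10000

/-- A matching (involution) `f` of the points `ZMod N` placed in order on a circle is
noncrossing if there are no points `a < b < c < d` (in the linear order of
representatives `0, …, N-1`) with `a` matched to `c` and `b` matched to `d`. -/
def Noncrossing {N : ℕ} (f : ZMod N → ZMod N) : Prop :=
  ¬ ∃ a b c d : ZMod N,
      f a = c ∧ f b = d ∧ a.val < b.val ∧ b.val < c.val ∧ c.val < d.val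

/-- A matching `f` of `ZMod N` is fixed by some reflection of the regular `N`-gon if
some reflection `x ↦ i - x` maps matched pairs to matched pairs. -/
def FixedBySomeReflection {N : ℕ} (f : ZMod N → ZMod N) : Prop :=
  ∃ i : ZMod N, ∀ x, f (i - x) = i - f x

def f12 : ZMod 12 → ZMod 12 := ![1, 0, 3, 2, 11, 6, 5, 10, 9, 8, 7, 4]

lemma f12_prop : Function.Involutive f12 ∧ (∀ x, f12 x ≠ x) ∧
    Noncrossing f12 ∧ ¬ FixedBySomeReflection f12 := by
  unfold Function.Involutive Noncrossing FixedBySomeReflection; decide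

def vec6 (a b c d e h : ZMod 6) : ZMod 6 → ZMod 6 := ![a,b,c,d,e,h]

lemma done6 (f : ZMod 6 → ZMod 6) (c0 c1 c2 c3 c4 c5 : ZMod 6)
    (a0 : f 0 = c0) (a1 : f 1 = c1) (a2 : f 2 = c2)
    (a3 : f 3 = c3) (a4 : f 4 = c4) (a5 : f 5 = c5)
    (h : FixedBySomeReflection (vec6 c0 c1 c2 c3 c4 c5)) :
    FixedBySomeReflection f := by
  have hf : f = vec6 c0 c1 c2 c3 c4 c5 := by
    funext x
    fin_cases x <;>
      first | exact a0 | exact a1 | exact a2 | exact a3 | exact a4 | exact a5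
  rw [hf]; exact h

/-- There is a noncrossing perfect matching of the 12 points of `ZMod 12` fixed by no
reflection of the regular 12-gon, whereas every noncrossing perfect matching of the
6 points of `ZMod 6` is fixed by some reflection of the regular hexagon. -/
theorem noncrossing_matchings_symmetry :
    (∃ f : ZMod 12 → ZMod 12, Function.Involutive f ∧ (∀ x, f x ≠ x) ∧
      Noncrossing f ∧ ¬ FixedBySomeReflection f) ∧
    ∀ f : ZMod 6 → ZMod 6, Function.Involutive f → (∀ x, f x ≠ x) →
      Noncrossing f → FixedBySomeReflection f := by
  refine ⟨⟨f12, f12_prop⟩, ?_⟩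
  intro f h1 h2 _
  have pin : ∀ a b : ZMod 6, f a = b → f b = a := fun a b hab => hab ▸ h1 a
  have e : ∀ y : ZMod 6, y = 0 ∨ y = 1 ∨ y = 2 ∨ y = 3 ∨ y = 4 ∨ y = 5 := by decide
  rcases e (f 0) with h0|h0|h0|h0|h0|h0
  · exact absurd h0 (h2 0)
  · have q0 : f 1 = 0 := pin _ _ h0
    rcases e (f 2) with hs|hs|hs|hs|hs|hs
    · exact absurd (h0.symm.trans (pin _ _ hs)) (by decide)
    · exact absurd (q0.symm.trans (pin _ _ hs)) (by decide)
    · exact absurd hs (h2 2)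
    · have q1 : f 3 = 2 := pin _ _ hs
      rcases e (f 4) with hr|hr|hr|hr|hr|hr
      · exact absurd (h0.symm.trans (pin _ _ hr)) (by decide)
      · exact absurd (q0.symm.trans (pin _ _ hr)) (by decide)
      · exact absurd (hs.symm.trans (pin _ _ hr)) (by decide)
      · exact absurd (q1.symm.trans (pin _ _ hr)) (by decide)
      · exact absurd hr (h2 4)
      · have q2 : f 5 = 4 := pin _ _ hr
        exact done6 f _ _ _ _ _ _ h0 q0 hs q1 hr q2 (by unfold FixedBySomeReflection vec6; decide)
    · have q1 : f 4 = 2 := pin _ _ hs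
      rcases e (f 3) with hr|hr|hr|hr|hr|hr
      · exact absurd (h0.symm.trans (pin _ _ hr)) (by decide)
      · exact absurd (q0.symm.trans (pin _ _ hr)) (by decide)
      · exact absurd (hs.symm.trans (pin _ _ hr)) (by decide)
      · exact absurd hr (h2 3)
      · exact absurd (q1.symm.trans (pin _ _ hr)) (by decide)
      · have q2 : f 5 = 3 := pin _ _ hr
        exact done6 f _ _ _ _ _ _ h0 q0 hs hr q1 q2 (by unfold FixedBySomeReflection vec6; decide)
    · have q1 : f 5 = 2 := pin _ _ hs
      rcases e (f 3) with hr|hr|hr|hr|hr|hr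
      · exact absurd (h0.symm.trans (pin _ _ hr)) (by decide)
      · exact absurd (q0.symm.trans (pin _ _ hr)) (by decide)
      · exact absurd (hs.symm.trans (pin _ _ hr)) (by decide)
      · exact absurd hr (h2 3)
      · have q2 : f 4 = 3 := pin _ _ hr
        exact done6 f _ _ _ _ _ _ h0 q0 hs hr q2 q1 (by unfold FixedBySomeReflection vec6; decide)
      · exact absurd (q1.symm.trans (pin _ _ hr)) (by decide)
  · have q0 : f 2 = 0 := pin _ _ h0
    rcases e (f 1) with hs|hs|hs|hs|hs|hs
    · exact absurd (h0.symm.trans (pin _ _ hs)) (by decide)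
    · exact absurd hs (h2 1)
    · exact absurd (q0.symm.trans (pin _ _ hs)) (by decide)
    · have q1 : f 3 = 1 := pin _ _ hs
      rcases e (f 4) with hr|hr|hr|hr|hr|hr
      · exact absurd (h0.symm.trans (pin _ _ hr)) (by decide)
      · exact absurd (hs.symm.trans (pin _ _ hr)) (by decide)
      · exact absurd (q0.symm.trans (pin _ _ hr)) (by decide)
      · exact absurd (q1.symm.trans (pin _ _ hr)) (by decide)
      · exact absurd hr (h2 4)
      · have q2 : f 5 = 4 := pin _ _ hr
        exact done6 f _ _ _ _ _ _ h0 hs q0 q1 hr q2 (by unfold FixedBySomeReflection vec6; decide)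
    · have q1 : f 4 = 1 := pin _ _ hs
      rcases e (f 3) with hr|hr|hr|hr|hr|hr
      · exact absurd (h0.symm.trans (pin _ _ hr)) (by decide)
      · exact absurd (hs.symm.trans (pin _ _ hr)) (by decide)
      · exact absurd (q0.symm.trans (pin _ _ hr)) (by decide)
      · exact absurd hr (h2 3)
      · exact absurd (q1.symm.trans (pin _ _ hr)) (by decide)
      · have q2 : f 5 = 3 := pin _ _ hr
        exact done6 f _ _ _ _ _ _ h0 hs q0 hr q1 q2 (by unfold FixedBySomeReflection vec6; decide)
    · have q1 : f 5 = 1 := pin _ _ hs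
      rcases e (f 3) with hr|hr|hr|hr|hr|hr
      · exact absurd (h0.symm.trans (pin _ _ hr)) (by decide)
      · exact absurd (hs.symm.trans (pin _ _ hr)) (by decide)
      · exact absurd (q0.symm.trans (pin _ _ hr)) (by decide)
      · exact absurd hr (h2 3)
      · have q2 : f 4 = 3 := pin _ _ hr
        exact done6 f _ _ _ _ _ _ h0 hs q0 hr q2 q1 (by unfold FixedBySomeReflection vec6; decide)
      · exact absurd (q1.symm.trans (pin _ _ hr)) (by decide)
  · have q0 : f 3 = 0 := pin _ _ h0
    rcases e (f 1) with hs|hs|hs|hs|hs|hs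
    · exact absurd (h0.symm.trans (pin _ _ hs)) (by decide)
    · exact absurd hs (h2 1)
    · have q1 : f 2 = 1 := pin _ _ hs
      rcases e (f 4) with hr|hr|hr|hr|hr|hr
      · exact absurd (h0.symm.trans (pin _ _ hr)) (by decide)
      · exact absurd (hs.symm.trans (pin _ _ hr)) (by decide)
      · exact absurd (q1.symm.trans (pin _ _ hr)) (by decide)
      · exact absurd (q0.symm.trans (pin _ _ hr)) (by decide)
      · exact absurd hr (h2 4)
      · have q2 : f 5 = 4 := pin _ _ hr
        exact done6 f _ _ _ _ _ _ h0 hs q1 q0 hr q2 (by unfold FixedBySomeReflection vec6; decide)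
    · exact absurd (q0.symm.trans (pin _ _ hs)) (by decide)
    · have q1 : f 4 = 1 := pin _ _ hs
      rcases e (f 2) with hr|hr|hr|hr|hr|hr
      · exact absurd (h0.symm.trans (pin _ _ hr)) (by decide)
      · exact absurd (hs.symm.trans (pin _ _ hr)) (by decide)
      · exact absurd hr (h2 2)
      · exact absurd (q0.symm.trans (pin _ _ hr)) (by decide)
      · exact absurd (q1.symm.trans (pin _ _ hr)) (by decide)
      · have q2 : f 5 = 2 := pin _ _ hr
        exact done6 f _ _ _ _ _ _ h0 hs hr q0 q1 q2 (by unfold FixedBySomeReflection vec6; decide)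
    · have q1 : f 5 = 1 := pin _ _ hs
      rcases e (f 2) with hr|hr|hr|hr|hr|hr
      · exact absurd (h0.symm.trans (pin _ _ hr)) (by decide)
      · exact absurd (hs.symm.trans (pin _ _ hr)) (by decide)
      · exact absurd hr (h2 2)
      · exact absurd (q0.symm.trans (pin _ _ hr)) (by decide)
      · have q2 : f 4 = 2 := pin _ _ hr
        exact done6 f _ _ _ _ _ _ h0 hs hr q0 q2 q1 (by unfold FixedBySomeReflection vec6; decide)
      · exact absurd (q1.symm.trans (pin _ _ hr)) (by decide)
  · have q0 : f 4 = 0 := pin _ _ h0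
    rcases e (f 1) with hs|hs|hs|hs|hs|hs
    · exact absurd (h0.symm.trans (pin _ _ hs)) (by decide)
    · exact absurd hs (h2 1)
    · have q1 : f 2 = 1 := pin _ _ hs
      rcases e (f 3) with hr|hr|hr|hr|hr|hr
      · exact absurd (h0.symm.trans (pin _ _ hr)) (by decide)
      · exact absurd (hs.symm.trans (pin _ _ hr)) (by decide)
      · exact absurd (q1.symm.trans (pin _ _ hr)) (by decide)
      · exact absurd hr (h2 3)
      · exact absurd (q0.symm.trans (pin _ _ hr)) (by decide)
      · have q2 : f 5 = 3 := pin _ _ hr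
        exact done6 f _ _ _ _ _ _ h0 hs q1 hr q0 q2 (by unfold FixedBySomeReflection vec6; decide)
    · have q1 : f 3 = 1 := pin _ _ hs
      rcases e (f 2) with hr|hr|hr|hr|hr|hr
      · exact absurd (h0.symm.trans (pin _ _ hr)) (by decide)
      · exact absurd (hs.symm.trans (pin _ _ hr)) (by decide)
      · exact absurd hr (h2 2)
      · exact absurd (q1.symm.trans (pin _ _ hr)) (by decide)
      · exact absurd (q0.symm.trans (pin _ _ hr)) (by decide)
      · have q2 : f 5 = 2 := pin _ _ hr
        exact done6 f _ _ _ _ _ _ h0 hs hr q1 q0 q2 (by unfold FixedBySomeReflection vec6; decide)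
    · exact absurd (q0.symm.trans (pin _ _ hs)) (by decide)
    · have q1 : f 5 = 1 := pin _ _ hs
      rcases e (f 2) with hr|hr|hr|hr|hr|hr
      · exact absurd (h0.symm.trans (pin _ _ hr)) (by decide)
      · exact absurd (hs.symm.trans (pin _ _ hr)) (by decide)
      · exact absurd hr (h2 2)
      · have q2 : f 3 = 2 := pin _ _ hr
        exact done6 f _ _ _ _ _ _ h0 hs hr q2 q0 q1 (by unfold FixedBySomeReflection vec6; decide)
      · exact absurd (q0.symm.trans (pin _ _ hr)) (by decide)
      · exact absurd (q1.symm.trans (pin _ _ hr)) (by decide)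
  · have q0 : f 5 = 0 := pin _ _ h0
    rcases e (f 1) with hs|hs|hs|hs|hs|hs
    · exact absurd (h0.symm.trans (pin _ _ hs)) (by decide)
    · exact absurd hs (h2 1)
    · have q1 : f 2 = 1 := pin _ _ hs
      rcases e (f 3) with hr|hr|hr|hr|hr|hr
      · exact absurd (h0.symm.trans (pin _ _ hr)) (by decide)
      · exact absurd (hs.symm.trans (pin _ _ hr)) (by decide)
      · exact absurd (q1.symm.trans (pin _ _ hr)) (by decide)
      · exact absurd hr (h2 3)
      · have q2 : f 4 = 3 := pin _ _ hr
        exact done6 f _ _ _ _ _ _ h0 hs q1 hr q2 q0 (by unfold FixedBySomeReflection vec6; decide)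
      · exact absurd (q0.symm.trans (pin _ _ hr)) (by decide)
    · have q1 : f 3 = 1 := pin _ _ hs
      rcases e (f 2) with hr|hr|hr|hr|hr|hr
      · exact absurd (h0.symm.trans (pin _ _ hr)) (by decide)
      · exact absurd (hs.symm.trans (pin _ _ hr)) (by decide)
      · exact absurd hr (h2 2)
      · exact absurd (q1.symm.trans (pin _ _ hr)) (by decide)
      · have q2 : f 4 = 2 := pin _ _ hr
        exact done6 f _ _ _ _ _ _ h0 hs hr q1 q2 q0 (by unfold FixedBySomeReflection vec6; decide)
      · exact absurd (q0.symm.trans (pin _ _ hr)) (by decide)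
    · have q1 : f 4 = 1 := pin _ _ hs
      rcases e (f 2) with hr|hr|hr|hr|hr|hr
      · exact absurd (h0.symm.trans (pin _ _ hr)) (by decide)
      · exact absurd (hs.symm.trans (pin _ _ hr)) (by decide)
      · exact absurd hr (h2 2)
      · have q2 : f 3 = 2 := pin _ _ hr
        exact done6 f _ _ _ _ _ _ h0 hs hr q2 q1 q0 (by unfold FixedBySomeReflection vec6; decide)
      · exact absurd (q1.symm.trans (pin _ _ hr)) (by decide)
      · exact absurd (q0.symm.trans (pin _ _ hr)) (by decide)
    · exact absurd (q0.symm.trans (pin _ _ hs)) (by decide)
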